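/- Let n, r, r₁ : [0,∞) → [0,∞) satisfy n(t) ≤ C₁·exp(d_tan·t), r(t) ≤ C₂·exp(-d_tr·t), and r₁(t) ≤ C₂·exp(-d_tr·t), with 0 < d_tan < d_tr. Then the quantity E(t) = (n(t)/(1 - n(t)·r(t)))·(r(t)·M + r₁(t)), defined whenever n(t)·r(t) < 1, satisfies: there exist t₀ ≥ 0 and C > 0 such that for all t ≥ t₀, n(t)·r(t) < 1/2 and E(t) ≤ C·exp((d_tan - d_tr)·t); in particular E(t) → 0 as t → ∞. -/

import Mathlib

/-! Since `n t * r t ≤ C₁ C₂ e^{(d_tan - d_tr) t} → 0`, the denominator `1 - n t * r t` is eventually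
at least `1/2`, so the error is at most `2 n (r M + r₁) ≤ 2 (M + 1) C₁ C₂ e^{(d_tan - d_tr) t}`. -/

open Filter Topology Real

lemma div_one_sub_mul_mul_le {n r r₁ M N R : ℝ} (hn0 : 0 ≤ n) (hr0 : 0 ≤ r) (hr₁0 : 0 ≤ r₁)
    (hM : 0 ≤ M) (hn : n ≤ N) (hr : r ≤ R) (hr₁ : r₁ ≤ R) (hnr : n * r ≤ 1 / 2) :
    n / (1 - n * r) * (r * M + r₁) ≤ 2 * (M + 1) * (N * R) := by
  have hquot : n / (1 - n * r) ≤ 2 * N := by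
    rw [div_le_iff₀ (by linarith)]
    nlinarith
  have hsum : r * M + r₁ ≤ R * (M + 1) := by nlinarith
  calc n / (1 - n * r) * (r * M + r₁) ≤ 2 * N * (R * (M + 1)) :=
        mul_le_mul hquot hsum (by positivity) (by linarith)
    _ = 2 * (M + 1) * (N * R) := by ring

lemma tendsto_const_mul_exp_mul_of_neg {a : ℝ} (c : ℝ) (ha : a < 0) :
    Tendsto (fun t => c * exp (a * t)) atTop (𝓝 0) := by
  simpa using (tendsto_exp_atBot.comp (tendsto_id.const_mul_atTop_of_neg ha)).const_mul c

theorem stmt3_general (n r r₁ : ℝ → ℝ) (C₁ C₂ dtan dtr M : ℝ)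
    (hC₁ : 0 < C₁) (hC₂ : 0 < C₂) (hsep : dtan < dtr) (hM : 0 < M)
    (hn0 : ∀ t ≥ (0:ℝ), 0 ≤ n t) (hr0 : ∀ t ≥ (0:ℝ), 0 ≤ r t)
    (hr₁0 : ∀ t ≥ (0:ℝ), 0 ≤ r₁ t)
    (hn : ∀ t ≥ (0:ℝ), n t ≤ C₁ * Real.exp (dtan * t))
    (hr : ∀ t ≥ (0:ℝ), r t ≤ C₂ * Real.exp (-dtr * t))
    (hr₁ : ∀ t ≥ (0:ℝ), r₁ t ≤ C₂ * Real.exp (-dtr * t)) :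
    ∃ t₀ ≥ (0:ℝ), ∃ C > (0:ℝ),
      (∀ t ≥ t₀, n t * r t < 1 / 2 ∧
        (n t / (1 - n t * r t)) * (r t * M + r₁ t) ≤ C * Real.exp ((dtan - dtr) * t)) ∧
      Filter.Tendsto (fun t => (n t / (1 - n t * r t)) * (r t * M + r₁ t))
        Filter.atTop (nhds 0) := by
  have hprod : ∀ t, C₁ * exp (dtan * t) * (C₂ * exp (-dtr * t))
      = C₁ * C₂ * exp ((dtan - dtr) * t) := fun t => by
    rw [sub_mul, sub_eq_add_neg, exp_add, ← neg_mul]; ring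
  have hdecay := tendsto_const_mul_exp_mul_of_neg (C₁ * C₂) (sub_neg.mpr hsep)
  obtain ⟨T, hT⟩ := eventually_atTop.mp (hdecay.eventually (gt_mem_nhds one_half_pos))
  have hbound : ∀ t ≥ max 0 T, n t * r t < 1 / 2 ∧ n t / (1 - n t * r t) * (r t * M + r₁ t)
      ≤ 2 * (M + 1) * (C₁ * C₂) * exp ((dtan - dtr) * t) := fun t ht => by
    have ht0 : 0 ≤ t := le_of_max_le_left ht
    have hsmall : n t * r t < 1 / 2 := by
      calc n t * r t ≤ C₁ * exp (dtan * t) * (C₂ * exp (-dtr * t)) :=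
            mul_le_mul (hn t ht0) (hr t ht0) (hr0 t ht0) (by positivity)
        _ < 1 / 2 := (hprod t).symm ▸ hT t (le_of_max_le_right ht)
    refine ⟨hsmall, ?_⟩
    calc n t / (1 - n t * r t) * (r t * M + r₁ t)
        ≤ 2 * (M + 1) * (C₁ * exp (dtan * t) * (C₂ * exp (-dtr * t))) :=
          div_one_sub_mul_mul_le (hn0 t ht0) (hr0 t ht0) (hr₁0 t ht0) hM.le (hn t ht0)
            (hr t ht0) (hr₁ t ht0) hsmall.le
      _ = 2 * (M + 1) * (C₁ * C₂) * exp ((dtan - dtr) * t) := by rw [hprod]; ring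
  refine ⟨max 0 T, le_max_left _ _, 2 * (M + 1) * (C₁ * C₂), by positivity, hbound, ?_⟩
  refine squeeze_zero' ?_ ?_ (tendsto_const_mul_exp_mul_of_neg (2 * (M + 1) * (C₁ * C₂)) (sub_neg.mpr hsep))
  · filter_upwards [eventually_ge_atTop (max 0 T)] with t ht
    have ht0 : 0 ≤ t := le_of_max_le_left ht
    have hden : 0 < 1 - n t * r t := by linarith [(hbound t ht).1]
    have := hn0 t ht0; have := hr0 t ht0; have := hr₁0 t ht0
    positivity
  · filter_upwards [eventually_ge_atTop (max 0 T)] with t ht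
    exact (hbound t ht).2

/-- Exponential convergence at rate d_tr - d_tan of the error bound (4.13)-(4.16). -/
theorem stmt3 (n r r₁ : ℝ → ℝ) (C₁ C₂ dtan dtr M : ℝ)
    (hC₁ : 0 < C₁) (hC₂ : 0 < C₂) (hdtan : 0 < dtan) (hsep : dtan < dtr) (hM : 0 < M)
    (hn0 : ∀ t ≥ (0:ℝ), 0 ≤ n t) (hr0 : ∀ t ≥ (0:ℝ), 0 ≤ r t)
    (hr₁0 : ∀ t ≥ (0:ℝ), 0 ≤ r₁ t)
    (hn : ∀ t ≥ (0:ℝ), n t ≤ C₁ * Real.exp (dtan * t))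
    (hr : ∀ t ≥ (0:ℝ), r t ≤ C₂ * Real.exp (-dtr * t))
    (hr₁ : ∀ t ≥ (0:ℝ), r₁ t ≤ C₂ * Real.exp (-dtr * t)) :
    ∃ t₀ ≥ (0:ℝ), ∃ C > (0:ℝ),
      (∀ t ≥ t₀, n t * r t < 1 / 2 ∧
        (n t / (1 - n t * r t)) * (r t * M + r₁ t) ≤ C * Real.exp ((dtan - dtr) * t)) ∧
      Filter.Tendsto (fun t => (n t / (1 - n t * r t)) * (r t * M + r₁ t))
        Filter.atTop (nhds 0) :=
  stmt3_general n r r₁ C₁ C₂ dtan dtr M hC₁ hC₂ hsep hM hn0 hr0 hr₁0 hn hr hr₁
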